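/- Let p be an odd prime and G a powerful finite p-group. Then every element of G^p is a p-th power: G^p = {x^p : x ∈ G}. -/

import Mathlib

/-!
Write `K^p` for the subgroup generated by the `p`-th powers of elements of `K`. The key fact is
that `G^p` is powerfully embedded, `[G^p, G] ≤ (G^p)^p`. Since a normal subgroup `H ≤ [H, G] H^p`
of a finite `p`-group is trivial, this reduces to the case where `(G^p)^p`, `[G^p, G, G]` and
`[G^p, G]^p` vanish, and there `g a^p g⁻¹ = (⁅g, a⁆ a)^p = a^p` by the class-two formula
`(xy)^p = ⁅y, x⁆^(p choose 2) x^p y^p` (`p` odd). Modulo `(G^p)^p` the subgroup `G^p` is then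
central of exponent `p`, so the same formula makes the `p`-th power map a homomorphism there, and
every `x ∈ G^p` has the form `y^p z` with `z ∈ (G^p)^p`. Now `H = ⟨y⟩ G^p` is powerful, since
`[H, H] ≤ (G^p)^p ≤ H^p`, and `y^p z ∈ H^p`. If `H = G`, then `G = ⟨y⟩` because `G^p` lies in the
Frattini subgroup, and `G` is abelian; otherwise induction on `|G|` applies to `H`.
-/

open Subgroup
open scoped commutatorElement

namespace QuotientGroup

variable {G : Type*} [Group G] {N K : Subgroup G} [N.Normal]

lemma map_mk'_eq_bot_iff : K.map (mk' N) = ⊥ ↔ K ≤ N := by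
  rw [Subgroup.map_eq_bot_iff, ker_mk']

lemma map_mk'_le_center_iff : K.map (mk' N) ≤ center (G ⧸ N) ↔ ⁅K, (⊤ : Subgroup G)⁆ ≤ N := by
  rw [← commutator_top_right_eq_bot_iff_le_center, ← map_top_of_surjective _ (mk'_surjective N),
    ← map_commutator, map_mk'_eq_bot_iff]

end QuotientGroup

namespace Subgroup

variable {G G' : Type*} [Group G] [Group G'] {p : ℕ}

def pPow (p : ℕ) (K : Subgroup G) : Subgroup G :=
  closure ((· ^ p) '' (K : Set G))

lemma pow_mem_pPow {K : Subgroup G} {g : G} (hg : g ∈ K) : g ^ p ∈ K.pPow p :=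
  subset_closure ⟨g, hg, rfl⟩

lemma pPow_mono {K L : Subgroup G} (h : K ≤ L) : K.pPow p ≤ L.pPow p :=
  closure_mono (Set.image_mono h)

lemma map_pPow (f : G →* G') (K : Subgroup G) : (K.pPow p).map f = (K.map f).pPow p := by
  simp only [pPow, MonoidHom.map_closure, coe_map, Set.image_image, map_pow]

lemma map_top_pPow_of_surjective {f : G →* G'} (hf : Function.Surjective f) :
    ((⊤ : Subgroup G).pPow p).map f = (⊤ : Subgroup G').pPow p := by
  rw [map_pPow, map_top_of_surjective f hf]

instance pPow_characteristic (K : Subgroup G) [K.Characteristic] : (K.pPow p).Characteristic :=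
  characteristic_iff_map_eq.mpr fun φ => by rw [map_pPow, characteristic_iff_map_eq.mp ‹_› φ]

lemma pow_eq_one_of_pPow_eq_bot {K : Subgroup G} (h : K.pPow p = ⊥) {g : G} (hg : g ∈ K) :
    g ^ p = 1 := by
  simpa [h] using pow_mem_pPow (p := p) hg

lemma pPow_eq_map_subtype (K : Subgroup G) :
    K.pPow p = ((⊤ : Subgroup K).pPow p).map K.subtype := by
  rw [map_pPow, ← MonoidHom.range_eq_map, range_subtype]

lemma top_pPow_eq_closure : (⊤ : Subgroup G).pPow p = closure {x | ∃ g : G, g ^ p = x} := by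
  simp [pPow, Set.range]

lemma exists_pow_eq_of_mem_top_pPow (hmul : ∀ a b : G, (a * b) ^ p = a ^ p * b ^ p) {x : G}
    (hx : x ∈ (⊤ : Subgroup G).pPow p) : ∃ y, y ^ p = x :=
  (closure_le (MonoidHom.mk' (· ^ p) hmul).range).mpr (by rintro _ ⟨y, -, rfl⟩; exact ⟨y, rfl⟩) hx

lemma eq_bot_of_le_commutator_top [Group.IsNilpotent G] {H : Subgroup G}
    (h : H ≤ ⁅H, (⊤ : Subgroup G)⁆) : H = ⊥ := by
  obtain ⟨n, hn⟩ := nilpotent_iff_lowerCentralSeries.mp ‹Group.IsNilpotent G›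
  have (k : ℕ) : H ≤ (⊤ : Subgroup G).lowerCentralSeries k := by
    induction k with
    | zero => exact le_top
    | succ k ih => exact h.trans (commutator_mono ih le_rfl)
  exact le_bot_iff.mp (hn ▸ this n)

lemma commutator_zpowers_sup_eq_bot {K : Subgroup G} (hK : K ≤ center G) (g : G) :
    ⁅zpowers g ⊔ K, zpowers g ⊔ K⁆ = ⊥ := by
  have hKc (L : Subgroup G) : K ≤ centralizer L := hK.trans (center_le_centralizer _)
  rw [commutator_eq_bot_iff_le_centralizer]
  exact sup_le (le_centralizer_iff.mpr (sup_le (le_centralizer _) (hKc _))) (hKc _)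

lemma commutator_zpowers_sup_le {K N : Subgroup G} [N.Normal]
    (h : ⁅K, (⊤ : Subgroup G)⁆ ≤ N) (g : G) : ⁅zpowers g ⊔ K, zpowers g ⊔ K⁆ ≤ N := by
  rw [← QuotientGroup.map_mk'_eq_bot_iff, map_commutator, map_sup, MonoidHom.map_zpowers]
  exact commutator_zpowers_sup_eq_bot (QuotientGroup.map_mk'_le_center_iff.mpr h) _

end Subgroup

lemma Odd.dvd_choose_two {p : ℕ} (hodd : Odd p) : p ∣ p.choose 2 := by
  obtain ⟨k, rfl⟩ := hodd
  exact ⟨k, by rw [Nat.choose_two_right, Nat.add_sub_cancel, mul_left_comm,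
    Nat.mul_div_cancel_left _ two_pos]⟩

section Commutator

variable {G : Type*} [Group G]

lemma pow_mul_eq_commutator_pow_mul_mul_pow {x y : G} (hy : Commute ⁅y, x⁆ y) (n : ℕ) :
    y ^ n * x = ⁅y, x⁆ ^ n * x * y ^ n := by
  have hconj : x * y ^ n * x⁻¹ = ⁅y, x⁆⁻¹ ^ n * y ^ n := by
    rw [← conj_pow, ← hy.inv_left.mul_pow, commutatorElement_def]
    group
  calc y ^ n * x = ⁅y, x⁆ ^ n * (⁅y, x⁆⁻¹ ^ n * y ^ n) * x := by rw [inv_pow, mul_inv_cancel_left]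
    _ = ⁅y, x⁆ ^ n * x * y ^ n := by rw [← hconj]; simp only [mul_assoc, inv_mul_cancel, mul_one]

lemma mul_pow_eq_commutator_pow_choose_mul {x y : G} (hx : Commute ⁅y, x⁆ x)
    (hy : Commute ⁅y, x⁆ y) (n : ℕ) : (x * y) ^ n = ⁅y, x⁆ ^ n.choose 2 * x ^ n * y ^ n := by
  induction n with
  | zero => simp
  | succ n ih =>
    calc (x * y) ^ (n + 1) = ⁅y, x⁆ ^ n.choose 2 * x ^ n * (y ^ n * x) * y := by
          rw [pow_succ, ih]; simp only [mul_assoc]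
      _ = ⁅y, x⁆ ^ n.choose 2 * (x ^ n * ⁅y, x⁆ ^ n) * x * (y ^ n * y) := by
          rw [pow_mul_eq_commutator_pow_mul_mul_pow hy]; simp only [mul_assoc]
      _ = ⁅y, x⁆ ^ (n + 1).choose 2 * x ^ (n + 1) * y ^ (n + 1) := by
          rw [← (hx.pow_pow n n).eq, Nat.choose_succ_succ', Nat.choose_one_right, add_comm,
            pow_add, pow_succ, pow_succ]
          simp only [mul_assoc]

variable {p : ℕ}

lemma mul_pow_eq_of_commutator_pow_eq_one (hodd : Odd p) {x y : G}
    (hx : Commute ⁅y, x⁆ x) (hy : Commute ⁅y, x⁆ y) (hp : ⁅y, x⁆ ^ p = 1) :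
    (x * y) ^ p = x ^ p * y ^ p := by
  obtain ⟨k, hk⟩ := hodd.dvd_choose_two
  rw [mul_pow_eq_commutator_pow_choose_mul hx hy, hk, pow_mul, hp, one_pow, one_mul]

lemma commute_pow_of_commutator_pow_eq_one (hodd : Odd p) {a g : G}
    (hp : ⁅g, a⁆ ^ p = 1) (hc : Commute ⁅a, ⁅g, a⁆⁆ ⁅g, a⁆) (ha : Commute ⁅a, ⁅g, a⁆⁆ a)
    (hcp : ⁅a, ⁅g, a⁆⁆ ^ p = 1) : Commute g (a ^ p) := by
  have : g * a ^ p * g⁻¹ = a ^ p := by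
    rw [← conj_pow, show g * a * g⁻¹ = ⁅g, a⁆ * a by rw [commutatorElement_def]; group,
      mul_pow_eq_of_commutator_pow_eq_one hodd hc ha hcp, hp, one_mul]
  exact mul_inv_eq_iff_eq_mul.mp this

end Commutator

namespace IsPGroup

variable {G : Type*} [Group G] {p : ℕ} [Fact p.Prime]

lemma eq_one_of_mem_zpowers_pow (hG : IsPGroup p G) {g : G} (h : g ∈ zpowers (g ^ p)) :
    g = 1 := by
  by_contra hg
  have hp : p.Prime := Fact.out
  have hpos := (hG.isOfFinOrder hp.ne_zero g).orderOf_pos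
  have hdvd := hG.dvd_orderOf hg
  have hle := Nat.le_of_dvd (Nat.div_pos (Nat.le_of_dvd hpos hdvd) hp.pos)
    ((orderOf_dvd_of_mem_zpowers h).trans (orderOf_pow_of_dvd hp.ne_zero hdvd).dvd)
  exact lt_irrefl _ (hle.trans_lt (Nat.div_lt_self hpos hp.one_lt))

variable [Finite G]

lemma pow_mem_of_isCoatom (hG : IsPGroup p G) {M : Subgroup G} (hM : IsCoatom M) (g : G) :
    g ^ p ∈ M := by
  have := hG.isNilpotent
  have := Group.normalizerCondition_of_isNilpotent.normal_of_coatom M hM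
  set π := QuotientGroup.mk' M
  have hMB : M ≤ (zpowers (π g ^ p)).comap π := fun m hm => by
    simp [π, (QuotientGroup.eq_one_iff m).mpr hm]
  have hgp : g ^ p ∈ (zpowers (π g ^ p)).comap π := by simp
  rcases hM.le_iff.mp hMB with hB | hB
  · have hg : π g = 1 := (hG.to_quotient M).eq_one_of_mem_zpowers_pow (hB ▸ mem_top g : g ∈ _)
    exact M.pow_mem ((QuotientGroup.eq_one_iff g).mp hg) p
  · rwa [hB] at hgp

lemma top_pPow_le_frattini (hG : IsPGroup p G) : (⊤ : Subgroup G).pPow p ≤ frattini G :=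
  (closure_le _).mpr <| Set.image_subset_iff.mpr fun g _ =>
    mem_iInf.mpr fun _ => mem_iInf.mpr fun hM => hG.pow_mem_of_isCoatom hM g

lemma eq_top_of_sup_top_pPow_eq_top (hG : IsPGroup p G) {K : Subgroup G}
    (h : K ⊔ (⊤ : Subgroup G).pPow p = ⊤) : K = ⊤ :=
  frattini_nongenerating (eq_top_mono (sup_le_sup_left hG.top_pPow_le_frattini K) h)

lemma eq_bot_of_le_center_of_le_pPow (hG : IsPGroup p G) {B : Subgroup G}
    (hB : B ≤ center G) (h : B ≤ B.pPow p) : B = ⊥ := by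
  have hpow : ∀ x ∈ B.pPow p, ∃ b ∈ B, b ^ p = x := fun x hx => by
    induction hx using closure_induction with
    | mem x hx => exact hx
    | one => exact ⟨1, B.one_mem, one_pow p⟩
    | mul x y _ _ hx hy =>
      obtain ⟨a, ha, rfl⟩ := hx
      obtain ⟨b, hb, rfl⟩ := hy
      exact ⟨a * b, B.mul_mem ha hb, Commute.mul_pow (mem_center_iff.mp (hB hb) a) p⟩
    | inv x _ hx =>
      obtain ⟨a, ha, rfl⟩ := hx
      exact ⟨a⁻¹, B.inv_mem ha, inv_pow a p⟩
  -- the `p`-th power map of the finite group `B` is onto, hence one-to-one,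
  -- which rules out the element of order `p` given by Cauchy's theorem
  have hsurj : Function.Surjective fun b : B => b ^ p := fun b => by
    obtain ⟨a, ha, hab⟩ := hpow b (h b.2)
    exact ⟨⟨a, ha⟩, Subtype.ext hab⟩
  by_contra hne
  obtain ⟨b, hb⟩ : ∃ b : B, orderOf b = p := by
    refine exists_prime_orderOf_dvd_card' p ((hG.to_subgroup B).card_eq_or_dvd.resolve_left ?_)
    rwa [card_eq_one]
  have : b = 1 := Finite.injective_iff_surjective.mpr hsurj (by simp [← hb, pow_orderOf_eq_one])
  exact (Fact.out : p.Prime).one_lt.ne' (hb ▸ this ▸ orderOf_one)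

lemma eq_bot_of_le_commutator_sup_pPow (hG : IsPGroup p G) {H : Subgroup G} [H.Normal]
    (h : H ≤ ⁅H, (⊤ : Subgroup G)⁆ ⊔ H.pPow p) : H = ⊥ := by
  have := hG.isNilpotent
  refine eq_bot_of_le_commutator_top ?_
  rw [← QuotientGroup.map_mk'_eq_bot_iff]
  refine (hG.to_quotient _).eq_bot_of_le_center_of_le_pPow
    (QuotientGroup.map_mk'_le_center_iff.mpr le_rfl) ?_
  calc H.map (QuotientGroup.mk' _) ≤ (⁅H, (⊤ : Subgroup G)⁆ ⊔ H.pPow p).map (QuotientGroup.mk' _) :=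
        map_mono h
    _ = (H.map (QuotientGroup.mk' _)).pPow p := by
      rw [Subgroup.map_sup, QuotientGroup.map_mk'_eq_bot_iff.mpr le_rfl, bot_sup_eq, map_pPow]

end IsPGroup

/-- This is the definition for odd `p`; for `p = 2` one asks for `[G, G] ≤ G^4` instead. -/
def IsPowerful (p : ℕ) (G : Type*) [Group G] : Prop :=
  ⁅(⊤ : Subgroup G), ⊤⁆ ≤ (⊤ : Subgroup G).pPow p

namespace IsPowerful

variable {G G' : Type*} [Group G] [Group G'] {p : ℕ}

lemma of_surjective {f : G →* G'} (hf : Function.Surjective f) (h : IsPowerful p G) :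
    IsPowerful p G' := by
  rw [IsPowerful, ← map_top_of_surjective f hf, ← map_commutator, ← map_pPow]
  exact map_mono h

lemma _root_.isPowerful_subgroup_iff {H : Subgroup G} : IsPowerful p H ↔ ⁅H, H⁆ ≤ H.pPow p := by
  rw [IsPowerful, ← map_le_map_iff_of_injective H.subtype_injective, map_commutator,
    ← MonoidHom.range_eq_map, range_subtype, ← pPow_eq_map_subtype]

lemma top_pPow_le_center (hodd : Odd p) (hG : IsPowerful p G)
    (h₁ : ((⊤ : Subgroup G).pPow p).pPow p = ⊥)
    (h₂ : ⁅⁅(⊤ : Subgroup G).pPow p, (⊤ : Subgroup G)⁆, (⊤ : Subgroup G)⁆ = ⊥)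
    (h₃ : ⁅(⊤ : Subgroup G).pPow p, (⊤ : Subgroup G)⁆.pPow p = ⊥) :
    (⊤ : Subgroup G).pPow p ≤ center G := by
  refine (closure_le _).mpr (Set.image_subset_iff.mpr fun a _ => mem_center_iff.mpr fun g => ?_)
  have hc : ⁅g, a⁆ ∈ (⊤ : Subgroup G).pPow p :=
    hG (commutator_mem_commutator (mem_top g) (mem_top a))
  have hd : ⁅a, ⁅g, a⁆⁆ ∈ ⁅(⊤ : Subgroup G).pPow p, (⊤ : Subgroup G)⁆ := by
    rw [commutator_comm]
    exact commutator_mem_commutator (mem_top a) hc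
  have hcen := mem_center_iff.mp (commutator_top_right_eq_bot_iff_le_center.mp h₂ hd)
  exact commute_pow_of_commutator_pow_eq_one hodd (pow_eq_one_of_pPow_eq_bot h₁ hc)
    (hcen _).symm (hcen a).symm (pow_eq_one_of_pPow_eq_bot h₃ hd)

variable [Fact p.Prime] [Finite G]

lemma commutator_top_pPow_eq_bot (hodd : Odd p) (hp : IsPGroup p G) (hG : IsPowerful p G)
    (h : ((⊤ : Subgroup G).pPow p).pPow p = ⊥) :
    ⁅(⊤ : Subgroup G).pPow p, (⊤ : Subgroup G)⁆ = ⊥ := by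
  set H := ⁅(⊤ : Subgroup G).pPow p, (⊤ : Subgroup G)⁆
  refine hp.eq_bot_of_le_commutator_sup_pPow ?_
  set M := ⁅H, (⊤ : Subgroup G)⁆ ⊔ H.pPow p
  have hπ := QuotientGroup.mk'_surjective M
  have hK := (map_top_pPow_of_surjective (p := p) hπ).symm
  have htop := (map_top_of_surjective _ hπ).symm
  have hQ := IsPowerful.top_pPow_le_center hodd (hG.of_surjective hπ) ?_ ?_ ?_
  · rwa [hK, QuotientGroup.map_mk'_le_center_iff] at hQ
  · rw [hK, ← map_pPow, h, Subgroup.map_bot]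
  · rw [hK, htop, ← map_commutator, ← map_commutator, QuotientGroup.map_mk'_eq_bot_iff]
    exact le_sup_left
  · rw [hK, htop, ← map_commutator, ← map_pPow, QuotientGroup.map_mk'_eq_bot_iff]
    exact le_sup_right

lemma commutator_top_pPow_le (hodd : Odd p) (hp : IsPGroup p G) (hG : IsPowerful p G) :
    ⁅(⊤ : Subgroup G).pPow p, (⊤ : Subgroup G)⁆ ≤ ((⊤ : Subgroup G).pPow p).pPow p := by
  set X := ((⊤ : Subgroup G).pPow p).pPow p
  have hπ := QuotientGroup.mk'_surjective X
  rw [← QuotientGroup.map_mk'_eq_bot_iff, map_commutator, map_top_of_surjective _ hπ,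
    map_top_pPow_of_surjective hπ]
  refine commutator_top_pPow_eq_bot hodd (hp.to_quotient X) (hG.of_surjective hπ) ?_
  rw [← map_top_pPow_of_surjective hπ, ← map_pPow, QuotientGroup.map_mk'_eq_bot_iff]

lemma exists_pow_mul_mem_top_pPow_pPow (hodd : Odd p) (hp : IsPGroup p G) (hG : IsPowerful p G)
    {x : G} (hx : x ∈ (⊤ : Subgroup G).pPow p) :
    ∃ y, ∃ z ∈ ((⊤ : Subgroup G).pPow p).pPow p, y ^ p * z = x := by
  set X := ((⊤ : Subgroup G).pPow p).pPow p
  have hπ := QuotientGroup.mk'_surjective X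
  have hK := map_top_pPow_of_surjective (p := p) hπ
  have hcen : (⊤ : Subgroup (G ⧸ X)).pPow p ≤ center (G ⧸ X) := by
    rw [← hK, QuotientGroup.map_mk'_le_center_iff]
    exact hG.commutator_top_pPow_le hodd hp
  have hcp : ((⊤ : Subgroup (G ⧸ X)).pPow p).pPow p = ⊥ := by
    rw [← hK, ← map_pPow, QuotientGroup.map_mk'_eq_bot_iff]
  have hmul (a b : G ⧸ X) : (a * b) ^ p = a ^ p * b ^ p := by
    have hc := (hG.of_surjective hπ) (commutator_mem_commutator (mem_top b) (mem_top a))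
    have hz := mem_center_iff.mp (hcen hc)
    exact mul_pow_eq_of_commutator_pow_eq_one hodd (hz a).symm (hz b).symm
      (pow_eq_one_of_pPow_eq_bot hcp hc)
  obtain ⟨q, hq⟩ := exists_pow_eq_of_mem_top_pPow hmul (hK ▸ mem_map_of_mem _ hx)
  obtain ⟨y, rfl⟩ := hπ q
  refine ⟨y, (y ^ p)⁻¹ * x, QuotientGroup.eq.mp ?_, mul_inv_cancel_left _ _⟩
  simpa using hq

lemma exists_pow_eq (hodd : Odd p) (hp : IsPGroup p G) (hG : IsPowerful p G) {x : G}
    (hx : x ∈ (⊤ : Subgroup G).pPow p) : ∃ y, y ^ p = x := by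
  induction hn : Nat.card G using Nat.strong_induction_on generalizing G with
  | _ n ih =>
    obtain ⟨y, z, hz, rfl⟩ := hG.exists_pow_mul_mem_top_pPow_pPow hodd hp hx
    set H := zpowers y ⊔ (⊤ : Subgroup G).pPow p
    by_cases hH : H = ⊤
    · have := isCyclic_iff_exists_zpowers_eq_top.mpr ⟨y, hp.eq_top_of_sup_top_pPow_eq_top hH⟩
      exact exists_pow_eq_of_mem_top_pPow
        (fun a b => Commute.mul_pow (Std.Commutative.comm a b) p) hx
    · have hcard : Nat.card H < n :=
        hn ▸ (card_le_card_group H).lt_of_ne ((card_eq_iff_eq_top H).not.mpr hH)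
      have hHpow : IsPowerful p H := isPowerful_subgroup_iff.mpr <|
        (commutator_zpowers_sup_le (hG.commutator_top_pPow_le hodd hp) y).trans
          (pPow_mono le_sup_right)
      have hmem : y ^ p * z ∈ H.pPow p :=
        mul_mem (pow_mem_pPow (mem_sup_left (mem_zpowers y))) (pPow_mono le_sup_right hz)
      rw [pPow_eq_map_subtype] at hmem
      obtain ⟨w, hw, hwx⟩ := hmem
      obtain ⟨v, rfl⟩ := ih _ hcard (hp.to_subgroup H) hHpow hw rfl
      exact ⟨v, hwx⟩

end IsPowerful

/-- In a powerful finite `p`-group (`p` odd), every element of `G^p` is a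
`p`-th power. -/
theorem powerful_mem_pPow_is_pth_power
    (p : ℕ) (hp : p.Prime) (hodd : Odd p)
    (G : Type*) [Group G] [Finite G] (hpG : IsPGroup p G)
    (hpow : ⁅(⊤ : Subgroup G), (⊤ : Subgroup G)⁆ ≤ Subgroup.closure {x : G | ∃ g : G, g ^ p = x}) :
    ∀ x ∈ Subgroup.closure {x : G | ∃ g : G, g ^ p = x}, ∃ y : G, y ^ p = x := by
  have := Fact.mk hp
  rw [← top_pPow_eq_closure] at hpow ⊢
  exact fun x hx => IsPowerful.exists_pow_eq hodd hpG hpow hx
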